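/- Let 1 ≤ k2, k1 = t1 with t1 ≤ min(n1, m), t2 = m with k2 ≤ t2 ≤ n2, and m < t1·t2. Let g1 ∈ L^{n1} with wt_R(g1) = t1 and g2 ∈ L^{n2} with wt_R(g2) = t2 = m, and set G1 = Moore(g1, k1), G2 = Moore(g2, k2). Then the minimum rank distance of the row space of the Kronecker product G1 ⊗ G2 (the extended Gabidulin–Kronecker product code) equals t2 − k2 + 1 = m − k2 + 1; that is, every nonzero codeword has rank weight at least m − k2 + 1, and some nonzero codeword has rank weight exactly m − k2 + 1. -/

import Mathlib

open Matrix Kronecker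

/-- Rank weight of a vector over the extension `L` of the base field `K`. -/
noncomputable def rankWeight (K : Type*) {L : Type*} [Field K] [Field L] [Algebra K L]
    {ι : Type*} (v : ι → L) : ℕ :=
  Module.finrank K (Submodule.span K (Set.range v))

/-- The `k × n` Moore matrix of `g`: entry `(i, j)` is `g j ^ q ^ i`. -/
def moore (q : ℕ) {L : Type*} [Field L] {n : ℕ} (g : Fin n → L) (k : ℕ) :
    Matrix (Fin k) (Fin n) L :=
  Matrix.of fun i j => g j ^ q ^ (i : ℕ)

/-!
Fixing a column index `j₁` of the first factor, the row `j₂ ↦ c (j₁, j₂)` of a codeword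
`c = x ᵥ* (G₁ ⊗ₖ G₂)` is `f ∘ g₂` for the linearized polynomial `f = ∑ yᵢ X^(q^i)` with
`yᵢ = ∑ x (i₁, i) G₁ i₁ j₁`. Such an `f` is `K`-linear, and when nonzero it has at most
`q^(k₂-1)` roots, so its kernel has dimension `< k₂`. Since `g₂` spans `L`, the row, and hence `c`,
has rank weight at least `m - k₂ + 1`.

Conversely, every subspace `W` of dimension `k - 1` is the kernel of a linearized polynomial with
`k` coefficients (take a nonzero vector in the left kernel of the Moore matrix of a basis of `W`).
With `f₁` killing a hyperplane of `⟨g₁⟩` and `f₂` killing a `(k₂ - 1)`-dimensional subspace, the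
codeword `(f₁ ∘ g₁) ⊗ (f₂ ∘ g₂)` has rank weight at most `1 · (m - k₂ + 1)`.
-/

open Module Submodule
open scoped Pointwise

section RankWeight

variable {K L : Type*} [Field K] [Field L] [Algebra K L]

instance Module.Finite.span_range {ι : Type*} [Finite ι] (v : ι → L) :
    Module.Finite K (span K (Set.range v)) :=
  .span_of_finite K (Set.finite_range v)

theorem rankWeight_eq_zero_iff {ι : Type*} [Finite ι] {v : ι → L} :
    rankWeight K v = 0 ↔ v = 0 := by
  rw [rankWeight, Submodule.finrank_eq_zero, span_eq_bot, Set.forall_mem_range, funext_iff]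
  rfl

theorem rankWeight_le_of_range_subset {ι κ : Type*} [Finite κ] {v : ι → L} {c : κ → L}
    (h : Set.range v ⊆ Set.range c) : rankWeight K v ≤ rankWeight K c :=
  Submodule.finrank_mono (span_mono h)

theorem rankWeight_comp_add_finrank_ker {ι : Type*} [Finite ι] (f : L →ₗ[K] L) (g : ι → L)
    (h : LinearMap.ker f ≤ span K (Set.range g)) :
    rankWeight K (f ∘ g) + finrank K (LinearMap.ker f) = rankWeight K g := by
  have := (f.domRestrict (span K (Set.range g))).finrank_range_add_finrank_ker
  rwa [LinearMap.range_domRestrict, LinearMap.ker_domRestrict,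
    (Submodule.comapSubtypeEquivOfLe h).finrank_eq, ← span_image, ← Set.range_comp] at this

theorem rankWeight_mul_le {ι κ : Type*} [Finite ι] [Finite κ] (a : ι → L) (b : κ → L) :
    rankWeight K (fun j : ι × κ => a j.1 * b j.2) ≤ rankWeight K a * rankWeight K b := by
  classical
  obtain ⟨sa, -, hsa_card, hsa_span, -⟩ := exists_finset_span_eq_linearIndepOn K (Set.range a)
  obtain ⟨sb, -, hsb_card, hsb_span, -⟩ := exists_finset_span_eq_linearIndepOn K (Set.range b)
  have hle : span K (Set.range fun j : ι × κ => a j.1 * b j.2) ≤ span K ↑(sa * sb) := by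
    rw [span_le, Finset.coe_mul, ← span_mul_span, hsa_span, hsb_span]
    rintro _ ⟨j, rfl⟩
    exact mul_mem_mul (subset_span ⟨j.1, rfl⟩) (subset_span ⟨j.2, rfl⟩)
  calc rankWeight K (fun j : ι × κ => a j.1 * b j.2)
      ≤ finrank K (span K (↑(sa * sb) : Set L)) := Submodule.finrank_mono hle
    _ ≤ (sa * sb).card := finrank_span_finset_le_card _
    _ ≤ sa.card * sb.card := Finset.card_mul_le
    _ = rankWeight K a * rankWeight K b := by rw [hsa_card, hsb_card]; rfl

end RankWeight

theorem Submodule.exists_le_finrank_eq {K M : Type*} [DivisionRing K] [AddCommGroup M]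
    [Module K M] (V : Submodule K M) {r : ℕ} (hr : r ≤ finrank K V) :
    ∃ W ≤ V, finrank K W = r := by
  obtain ⟨f, hf⟩ := exists_linearIndependent_of_le_finrank hr
  refine ⟨span K (Set.range fun i => (f i : M)), span_le.mpr ?_, ?_⟩
  · rintro _ ⟨i, rfl⟩; exact (f i).2
  · exact (finrank_span_eq_card (hf.map' V.subtype V.ker_subtype)).trans (Fintype.card_fin r)

section LinearizedPolynomial

open Polynomial

variable {L : Type*} [Field L]

noncomputable def linearizedPoly (q : ℕ) {k : ℕ} (y : Fin k → L) : L[X] :=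
  ∑ i, C (y i) * X ^ q ^ (i : ℕ)

theorem eval_linearizedPoly (q : ℕ) {k : ℕ} (y : Fin k → L) (z : L) :
    (linearizedPoly q y).eval z = ∑ i, y i * z ^ q ^ (i : ℕ) := by
  simp [linearizedPoly, eval_finsetSum]

theorem natDegree_linearizedPoly_le {q : ℕ} (hq : 0 < q) {k : ℕ} (y : Fin k → L) :
    (linearizedPoly q y).natDegree ≤ q ^ (k - 1) := by
  refine natDegree_sum_le_of_forall_le _ _ fun i _ => ?_
  refine (natDegree_C_mul_le _ _).trans ((natDegree_X_pow_le _).trans ?_)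
  exact Nat.pow_le_pow_right hq (by omega)

theorem coeff_linearizedPoly_pow {q : ℕ} (hq : 1 < q) {k : ℕ} (y : Fin k → L) (i : Fin k) :
    (linearizedPoly q y).coeff (q ^ (i : ℕ)) = y i := by
  rw [linearizedPoly, finsetSum_coeff, Finset.sum_eq_single i]
  · simp
  · intro j _ hji
    have : q ^ (i : ℕ) ≠ q ^ (j : ℕ) := fun h => hji (Fin.ext (Nat.pow_right_injective hq h).symm)
    simp [coeff_X_pow, this]
  · simp

theorem linearizedPoly_ne_zero {q : ℕ} (hq : 1 < q) {k : ℕ} {y : Fin k → L} (hy : y ≠ 0) :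
    linearizedPoly q y ≠ 0 := by
  obtain ⟨i, hi⟩ := Function.ne_iff.mp hy
  exact fun h => hi (by rw [← coeff_linearizedPoly_pow hq y i, h, coeff_zero, Pi.zero_apply])

end LinearizedPolynomial

section LinearizedMap

variable (K : Type*) {L : Type*} [Field K] [Fintype K] [Field L] [Algebra K L]

noncomputable def linearizedMap {k : ℕ} (y : Fin k → L) : L →ₗ[K] L :=
  ∑ i, y i • ((FiniteField.frobeniusAlgHom K L) ^ (i : ℕ)).toLinearMap

variable {K}

theorem linearizedMap_apply {k : ℕ} (y : Fin k → L) (z : L) :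
    linearizedMap K y z = ∑ i, y i * z ^ Fintype.card K ^ (i : ℕ) := by
  simp [linearizedMap, AlgHom.coe_pow, FiniteField.coe_frobeniusAlgHom, pow_iterate]

theorem vecMul_moore {n k : ℕ} (y : Fin k → L) (g : Fin n → L) :
    y ᵥ* moore (Fintype.card K) g k = linearizedMap K y ∘ g := by
  ext j
  simp [vecMul, dotProduct, moore, linearizedMap_apply]

theorem eval_linearizedPoly_eq_linearizedMap {k : ℕ} (y : Fin k → L) (z : L) :
    (linearizedPoly (Fintype.card K) y).eval z = linearizedMap K y z := by
  rw [eval_linearizedPoly, linearizedMap_apply]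

variable [FiniteDimensional K L]

theorem finrank_ker_linearizedMap_lt {k : ℕ} {y : Fin k → L} (hy : y ≠ 0) :
    finrank K (LinearMap.ker (linearizedMap K y)) < k := by
  classical
  have : Finite L := Module.finite_of_finite K
  have : Fintype L := Fintype.ofFinite L
  set q := Fintype.card K
  have hq : 1 < q := Fintype.one_lt_card
  set P := linearizedPoly q y
  have hP : P ≠ 0 := linearizedPoly_ne_zero hq hy
  have hker_roots : ((LinearMap.ker (linearizedMap K y) : Set L).toFinset).val ⊆ P.roots := by
    intro z hz
    rw [Finset.mem_val, Set.mem_toFinset, SetLike.mem_coe, LinearMap.mem_ker] at hz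
    rw [Polynomial.mem_roots hP, Polynomial.IsRoot.def, eval_linearizedPoly_eq_linearizedMap, hz]
  have hcard : q ^ finrank K (LinearMap.ker (linearizedMap K y)) ≤ q ^ (k - 1) := by
    calc q ^ finrank K (LinearMap.ker (linearizedMap K y))
        = ((LinearMap.ker (linearizedMap K y) : Set L).toFinset).card := by
          rw [Set.toFinset_card]; exact (Module.card_eq_pow_finrank).symm
      _ ≤ P.natDegree := Polynomial.card_le_degree_of_subset_roots hker_roots
      _ ≤ q ^ (k - 1) := natDegree_linearizedPoly_le (by omega) y
  obtain ⟨i, -⟩ := Function.ne_iff.mp hy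
  have := (Nat.pow_le_pow_iff_right hq).mp hcard
  have := i.pos
  omega

theorem exists_ker_linearizedMap_eq {k : ℕ} (W : Submodule K L) (hW : finrank K W + 1 = k) :
    ∃ y : Fin k → L, LinearMap.ker (linearizedMap K y) = W := by
  let b := Module.finBasis K W
  let M := moore (Fintype.card K) (fun i => (b i : L)) k
  have hlt : finrank L (Fin (finrank K W) → L) < finrank L (Fin k → L) := by simp; omega
  obtain ⟨y, hyM, hy⟩ := exists_mem_ne_zero_of_ne_bot (LinearMap.ker_ne_bot_of_finrank_lt
    (f := M.vecMulLinear) hlt)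
  have hW_le : W ≤ LinearMap.ker (linearizedMap K y) := by
    have hvanish : (linearizedMap K y).comp W.subtype = 0 := b.ext fun i => by
      simpa [M, vecMul_moore] using congrFun (LinearMap.mem_ker.mp hyM) i
    exact fun w hw => LinearMap.congr_fun hvanish ⟨w, hw⟩
  refine ⟨y, (Submodule.eq_of_le_of_finrank_le hW_le ?_).symm⟩
  have := finrank_ker_linearizedMap_lt (K := K) hy
  omega

theorem exists_rankWeight_linearizedMap_comp_eq {n k : ℕ} (g : Fin n → L) (hk : 1 ≤ k)
    (hkg : k ≤ rankWeight K g) :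
    ∃ y : Fin k → L, rankWeight K (linearizedMap K y ∘ g) = rankWeight K g - k + 1 := by
  obtain ⟨W, hWg, hW⟩ := Submodule.exists_le_finrank_eq (span K (Set.range g))
    (show k - 1 ≤ rankWeight K g by omega)
  obtain ⟨y, hy⟩ := exists_ker_linearizedMap_eq W (show finrank K W + 1 = k by omega)
  have := rankWeight_comp_add_finrank_ker (linearizedMap K y) g (hy ▸ hWg)
  exact ⟨y, by rw [hy] at this; omega⟩

end LinearizedMap

section Kronecker

variable {R : Type*} [CommSemiring R] {l m n p : Type*} [Fintype l] [Fintype n]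

theorem vecMul_kronecker_apply (x : l × n → R) (A : Matrix l m R) (B : Matrix n p R)
    (j : m × p) :
    (x ᵥ* (A ⊗ₖ B)) j = ((fun i₂ => ∑ i₁, x (i₁, i₂) * A i₁ j.1) ᵥ* B) j.2 := by
  simp only [vecMul, dotProduct, Fintype.sum_prod_type, kroneckerMap_apply, Finset.sum_mul]
  rw [Finset.sum_comm]
  exact Finset.sum_congr rfl fun _ _ => Finset.sum_congr rfl fun _ _ => by ring

theorem vecMul_kronecker_vecMul (a : l → R) (b : n → R) (A : Matrix l m R) (B : Matrix n p R) :
    (fun i => a i.1 * b i.2) ᵥ* (A ⊗ₖ B) = fun j => (a ᵥ* A) j.1 * (b ᵥ* B) j.2 := by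
  ext j
  simp only [vecMul, dotProduct, Fintype.sum_prod_type, kroneckerMap_apply, Finset.sum_mul_sum]
  exact Finset.sum_congr rfl fun _ _ => Finset.sum_congr rfl fun _ _ => by ring

end Kronecker

section KroneckerGabidulin

variable {K L : Type*} [Field K] [Fintype K] [Field L] [Algebra K L] [FiniteDimensional K L]

theorem le_rankWeight_vecMul_kronecker_moore {ι μ : Type*} [Fintype ι] [Finite μ] {n k : ℕ}
    (A : Matrix ι μ L) {g : Fin n → L} (hg : span K (Set.range g) = ⊤) (x : ι × Fin k → L)
    (hc : x ᵥ* (A ⊗ₖ moore (Fintype.card K) g k) ≠ 0) :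
    finrank K L - k + 1 ≤ rankWeight K (x ᵥ* (A ⊗ₖ moore (Fintype.card K) g k)) := by
  set c := x ᵥ* (A ⊗ₖ moore (Fintype.card K) g k)
  obtain ⟨j, hj⟩ := Function.ne_iff.mp hc
  set y : Fin k → L := fun i₂ => ∑ i₁, x (i₁, i₂) * A i₁ j.1
  have hrow : (fun j₂ => c (j.1, j₂)) = linearizedMap K y ∘ g := by
    rw [← vecMul_moore]; ext j₂; exact vecMul_kronecker_apply x A _ (j.1, j₂)
  have hy : y ≠ 0 := by
    rintro hy0
    exact hj (by simpa [hy0, linearizedMap_apply] using congrFun hrow j.2)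
  have hsub : Set.range (linearizedMap K y ∘ g) ⊆ Set.range c := by
    rw [← hrow]; rintro _ ⟨j₂, rfl⟩; exact ⟨_, rfl⟩
  have hrank := rankWeight_comp_add_finrank_ker (linearizedMap K y) g (hg ▸ le_top)
  have hg_rank : rankWeight K g = finrank K L := by rw [rankWeight, hg, finrank_top]
  have := finrank_ker_linearizedMap_lt (K := K) hy
  have := rankWeight_le_of_range_subset (K := K) hsub
  have := (rankWeight_eq_zero_iff (K := K)).not.mpr hc
  omega

theorem exists_vecMul_kronecker_moore_ne_zero_rankWeight_le {n₁ n₂ k₁ k₂ : ℕ} (g₁ : Fin n₁ → L)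
    (g₂ : Fin n₂ → L) (hg₁ : rankWeight K g₁ = k₁) (hk₁ : 1 ≤ k₁) (hk₂ : 1 ≤ k₂)
    (hg₂ : k₂ ≤ rankWeight K g₂) :
    ∃ x : Fin k₁ × Fin k₂ → L,
      x ᵥ* (moore (Fintype.card K) g₁ k₁ ⊗ₖ moore (Fintype.card K) g₂ k₂) ≠ 0 ∧
      rankWeight K (x ᵥ* (moore (Fintype.card K) g₁ k₁ ⊗ₖ moore (Fintype.card K) g₂ k₂)) ≤
        rankWeight K g₂ - k₂ + 1 := by
  obtain ⟨y₁, hy₁⟩ := exists_rankWeight_linearizedMap_comp_eq g₁ hk₁ hg₁.ge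
  obtain ⟨y₂, hy₂⟩ := exists_rankWeight_linearizedMap_comp_eq g₂ hk₂ hg₂
  refine ⟨fun i => y₁ i.1 * y₂ i.2, ?_⟩
  rw [vecMul_kronecker_vecMul, vecMul_moore, vecMul_moore]
  obtain ⟨j₁, hj₁⟩ := Function.ne_iff.mp <|
    (rankWeight_eq_zero_iff (K := K) (v := linearizedMap K y₁ ∘ g₁)).not.mp (by omega)
  obtain ⟨j₂, hj₂⟩ := Function.ne_iff.mp <|
    (rankWeight_eq_zero_iff (K := K) (v := linearizedMap K y₂ ∘ g₂)).not.mp (by omega)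
  refine ⟨Function.ne_iff.mpr ⟨(j₁, j₂), mul_ne_zero hj₁ hj₂⟩, ?_⟩
  calc _ ≤ rankWeight K (linearizedMap K y₁ ∘ g₁) * rankWeight K (linearizedMap K y₂ ∘ g₂) :=
        rankWeight_mul_le _ _
    _ = rankWeight K g₂ - k₂ + 1 := by rw [hy₁, hy₂, hg₁, Nat.sub_self, zero_add, one_mul]

end KroneckerGabidulin

theorem egk_min_rank_distance_case1_general
    (q m n1 k1 n2 k2 t1 t2 : ℕ)
    (K L : Type*) [Field K] [Fintype K] [Field L] [Algebra K L]
    (hq : Fintype.card K = q) (hm : Module.finrank K L = m)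
    (hk2pos : 1 ≤ k2) (hk1t1 : k1 = t1)
    (ht2m : t2 = m) (hk2t2 : k2 ≤ t2) (hmt : m < t1 * t2)
    (g1 : Fin n1 → L) (hg1 : rankWeight K g1 = t1)
    (g2 : Fin n2 → L) (hg2 : rankWeight K g2 = t2) :
    (∀ c : Fin n1 × Fin n2 → L,
      (∃ x : Fin k1 × Fin k2 → L, c = x ᵥ* (moore q g1 k1 ⊗ₖ moore q g2 k2)) →
      c ≠ 0 → t2 - k2 + 1 ≤ rankWeight K c) ∧
    ∃ c : Fin n1 × Fin n2 → L,
      (∃ x : Fin k1 × Fin k2 → L, c = x ᵥ* (moore q g1 k1 ⊗ₖ moore q g2 k2)) ∧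
      c ≠ 0 ∧ rankWeight K c = t2 - k2 + 1 := by
  subst hq hk1t1 ht2m hm
  have : FiniteDimensional K L := Module.finite_of_finrank_pos (by omega)
  have hg2_span : span K (Set.range g2) = ⊤ := Submodule.eq_top_of_finrank_eq hg2
  have hk1 : 1 ≤ k1 := Nat.pos_of_ne_zero fun h => by simp [h] at hmt
  obtain ⟨x, hx, hx_rank⟩ :=
    exists_vecMul_kronecker_moore_ne_zero_rankWeight_le g1 g2 hg1 hk1 hk2pos (hg2 ▸ hk2t2)
  refine ⟨?_, _, ⟨x, rfl⟩, hx, ?_⟩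
  · rintro _ ⟨x, rfl⟩ hc
    exact le_rankWeight_vecMul_kronecker_moore _ hg2_span x hc
  · exact le_antisymm (hg2 ▸ hx_rank) (le_rankWeight_vecMul_kronecker_moore _ hg2_span x hx)

theorem egk_min_rank_distance_case1
    (q m n1 k1 n2 k2 t1 t2 : ℕ)
    (K L : Type*) [Field K] [Fintype K] [Field L] [Algebra K L]
    (hq : Fintype.card K = q) (hm : Module.finrank K L = m)
    (hk2pos : 1 ≤ k2) (hk1t1 : k1 = t1) (ht1 : t1 ≤ min n1 m)
    (ht2m : t2 = m) (hk2t2 : k2 ≤ t2) (ht2n2 : t2 ≤ n2) (hmt : m < t1 * t2)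
    (g1 : Fin n1 → L) (hg1 : rankWeight K g1 = t1)
    (g2 : Fin n2 → L) (hg2 : rankWeight K g2 = t2) :
    (∀ c : Fin n1 × Fin n2 → L,
      (∃ x : Fin k1 × Fin k2 → L, c = x ᵥ* (moore q g1 k1 ⊗ₖ moore q g2 k2)) →
      c ≠ 0 → t2 - k2 + 1 ≤ rankWeight K c) ∧
    ∃ c : Fin n1 × Fin n2 → L,
      (∃ x : Fin k1 × Fin k2 → L, c = x ᵥ* (moore q g1 k1 ⊗ₖ moore q g2 k2)) ∧
      c ≠ 0 ∧ rankWeight K c = t2 - k2 + 1 :=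
  egk_min_rank_distance_case1_general q m n1 k1 n2 k2 t1 t2 K L hq hm hk2pos hk1t1 ht2m hk2t2 hmt g1
    hg1 g2 hg2
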